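/- Let G := A₄ ⋊_φ C_{2^r} with r ≥ 2, where a generator x̃ of C_{2^r} acts via an automorphism φ_{x̃} of A₄ of order 4 sending ỹ := (12)(34) to (13)(24). Then the subgroup ⟨x̃, ỹ⟩ of G is isomorphic to the Rédei group ⟨x, y | x^(2^r) = y² = [x,y]² = [x,[x,y]] = [y,[x,y]] = 1⟩, and G is not 2-nilpotent. -/

import Mathlib

/-!
The assignment `x ↦ inr x̃`, `y ↦ inl ỹ` respects the Rédei relations: since `φ x̃` has order
dividing 4 and sends `ỹ` to another involution of the Klein four-group `V`, it swaps the two and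
fixes their product, which is the commutator `⁅x̃, ỹ⁆`. Normal forms `x^i y^j z^k` bound the
order of the Rédei group by `2^r · 2 · 2`, while `⟨x̃, ỹ⟩` contains the `4 · 2^r` products
`inl v * inr x̃^i` with `v ∈ V`, so the surjection onto `⟨x̃, ỹ⟩` is an isomorphism.

A normal 2-complement has odd order, so it lies in `A₄` and has order 3 there; it is then
normal in `A₄` with quotient of order 4, hence abelian, so it would contain the commutator
subgroup `V` of order 4.
-/

open scoped commutatorElement

/-- The generator `x` of the free group on two letters. -/
def gx : FreeGroup (Fin 2) := FreeGroup.of 0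

/-- The generator `y` of the free group on two letters. -/
def gy : FreeGroup (Fin 2) := FreeGroup.of 1

/-- The relations of the Rédei presentation with parameters `r`, `s`:
`x^(2^r)`, `y^(2^s)`, `⁅x,y⁆^2`, `⁅x,⁅x,y⁆⁆`, `⁅y,⁅x,y⁆⁆`,
where `⁅a,b⁆ = a*b*a⁻¹*b⁻¹`. -/
def redeiRels (r s : ℕ) : Set (FreeGroup (Fin 2)) :=
  {gx ^ (2 ^ r), gy ^ (2 ^ s), ⁅gx, gy⁆ ^ 2, ⁅gx, ⁅gx, gy⁆⁆, ⁅gy, ⁅gx, gy⁆⁆}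

/-- The Rédei group `⟨x,y ∣ x^(2^r) = y^(2^s) = [x,y]^2 = [x,[x,y]] = [y,[x,y]] = 1⟩`. -/
abbrev RedeiGroup (r s : ℕ) := PresentedGroup (redeiRels r s)

/-- The image of the generator `x` in the Rédei group. -/
def Dx (r s : ℕ) : RedeiGroup r s := PresentedGroup.of 0

/-- The image of the generator `y` in the Rédei group. -/
def Dy (r s : ℕ) : RedeiGroup r s := PresentedGroup.of 1

/-- The element `z = [x,y]` of the Rédei group. -/
def Dz (r s : ℕ) : RedeiGroup r s := ⁅Dx r s, Dy r s⁆

section NormalForm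

variable {G : Type*} [Group G] {x y z : G}

theorem mul_pow_eq_pow_mul_mul_pow (hzx : Commute z x) (hyx : y * x = x * y * z) (a : ℕ) :
    y * x ^ a = x ^ a * y * z ^ a := by
  induction a with
  | zero => simp
  | succ a ih =>
    calc y * x ^ (a + 1) = x ^ a * y * (z ^ a * x) := by rw [pow_succ, ← mul_assoc, ih, mul_assoc]
      _ = x ^ a * (y * x) * z ^ a := by rw [(hzx.pow_left a).eq]; group
      _ = x ^ (a + 1) * y * z ^ (a + 1) := by rw [hyx, pow_succ, pow_succ]; group

theorem pow_mul_pow_eq_pow_mul_pow_mul_pow (hzx : Commute z x) (hzy : Commute z y)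
    (hyx : y * x = x * y * z) (j a : ℕ) :
    y ^ j * x ^ a = x ^ a * y ^ j * z ^ (j * a) := by
  induction j with
  | zero => simp
  | succ j ih =>
    calc y ^ (j + 1) * x ^ a = x ^ a * y ^ j * (z ^ (j * a) * y) * z ^ a := by
          rw [pow_succ, mul_assoc, mul_pow_eq_pow_mul_mul_pow hzx hyx, ← mul_assoc, ← mul_assoc, ih]
          group
      _ = x ^ a * y ^ (j + 1) * z ^ ((j + 1) * a) := by
          rw [(hzy.pow_left _).eq, add_mul, one_mul, pow_add, pow_succ]; group

theorem normalForm_mul (hzx : Commute z x) (hzy : Commute z y) (hyx : y * x = x * y * z)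
    (i j k a b c : ℕ) :
    x ^ i * y ^ j * z ^ k * (x ^ a * y ^ b * z ^ c) =
      x ^ (i + a) * y ^ (j + b) * z ^ (j * a + k + c) := by
  calc x ^ i * y ^ j * z ^ k * (x ^ a * y ^ b * z ^ c)
      = x ^ i * y ^ j * (z ^ k * (x ^ a * y ^ b)) * z ^ c := by group
    _ = x ^ i * (y ^ j * x ^ a) * y ^ b * (z ^ k * z ^ c) := by
        rw [((hzx.pow_pow k a).mul_right (hzy.pow_pow k b)).eq]; group
    _ = x ^ i * x ^ a * y ^ j * (z ^ (j * a) * y ^ b) * (z ^ k * z ^ c) := by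
        rw [pow_mul_pow_eq_pow_mul_pow_mul_pow hzx hzy hyx]; group
    _ = x ^ (i + a) * y ^ (j + b) * z ^ (j * a + k + c) := by
        rw [(hzy.pow_pow _ _).eq]; simp only [pow_add]; group

theorem exists_eq_pow_mul_pow_mul_pow_of_mem_closure (hzx : Commute z x) (hzy : Commute z y)
    (hyx : y * x = x * y * z) (hx : IsOfFinOrder x) (hy : IsOfFinOrder y) {g : G}
    (hg : g ∈ Subgroup.closure {x, y}) : ∃ i j k : ℕ, g = x ^ i * y ^ j * z ^ k := by
  induction hg using Subgroup.closure_induction'' with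
  | mem g hg =>
    rcases hg with rfl | rfl
    · exact ⟨1, 0, 0, by simp⟩
    · exact ⟨0, 1, 0, by simp⟩
  | inv_mem g hg =>
    rcases hg with rfl | rfl
    · obtain ⟨i, hi⟩ := hx.mem_powers_iff_mem_zpowers.2 (inv_mem (Subgroup.mem_zpowers g))
      exact ⟨i, 0, 0, by simp [hi]⟩
    · obtain ⟨j, hj⟩ := hy.mem_powers_iff_mem_zpowers.2 (inv_mem (Subgroup.mem_zpowers g))
      exact ⟨0, j, 0, by simp [hj]⟩
  | one => exact ⟨0, 0, 0, by simp⟩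
  | mul g h _ _ hg hh =>
    obtain ⟨i, j, k, rfl⟩ := hg
    obtain ⟨a, b, c, rfl⟩ := hh
    exact ⟨_, _, _, normalForm_mul hzx hzy hyx i j k a b c⟩

end NormalForm

namespace RedeiGroup

variable (r s : ℕ)

theorem Dx_pow : Dx r s ^ 2 ^ r = 1 :=
  (map_pow _ gx _).symm.trans (PresentedGroup.one_of_mem (by simp [redeiRels]))

theorem Dy_pow : Dy r s ^ 2 ^ s = 1 :=
  (map_pow _ gy _).symm.trans (PresentedGroup.one_of_mem (by simp [redeiRels]))

theorem Dz_sq : Dz r s ^ 2 = 1 :=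
  (map_pow _ ⁅gx, gy⁆ _).symm.trans (PresentedGroup.one_of_mem (by simp [redeiRels]))

theorem commute_Dz_Dx : Commute (Dz r s) (Dx r s) :=
  (commutatorElement_eq_one_iff_commute.1
    ((map_commutatorElement _ gx ⁅gx, gy⁆).symm.trans
      (PresentedGroup.one_of_mem (by simp [redeiRels])))).symm

theorem commute_Dz_Dy : Commute (Dz r s) (Dy r s) :=
  (commutatorElement_eq_one_iff_commute.1
    ((map_commutatorElement _ gy ⁅gx, gy⁆).symm.trans
      (PresentedGroup.one_of_mem (by simp [redeiRels])))).symm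

theorem Dy_mul_Dx : Dy r s * Dx r s = Dx r s * Dy r s * Dz r s := by
  have hz : (Dz r s)⁻¹ = Dz r s := inv_eq_of_mul_eq_one_right (by rw [← sq, Dz_sq])
  have hxy : Dz r s * Dy r s * Dx r s = Dx r s * Dy r s := by
    rw [Dz, commutatorElement_def]; group
  calc Dy r s * Dx r s = (Dz r s)⁻¹ * (Dz r s * Dy r s * Dx r s) := by group
    _ = Dz r s * (Dx r s * Dy r s) := by rw [hz, hxy]
    _ = Dx r s * Dy r s * Dz r s := ((commute_Dz_Dx r s).mul_right (commute_Dz_Dy r s)).eq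

theorem closure_Dx_Dy : Subgroup.closure {Dx r s, Dy r s} = ⊤ := by
  have h : Set.range (PresentedGroup.of (rels := redeiRels r s)) = {Dx r s, Dy r s} := by
    ext; simp [Fin.exists_fin_two, eq_comm, Dx, Dy]
  rw [← h, PresentedGroup.closure_range_of]

theorem surjective_normalForm :
    Function.Surjective fun p : Fin (2 ^ r) × Fin (2 ^ s) × Fin 2 =>
      Dx r s ^ (p.1 : ℕ) * Dy r s ^ (p.2.1 : ℕ) * Dz r s ^ (p.2.2 : ℕ) := by
  intro g
  obtain ⟨i, j, k, rfl⟩ := exists_eq_pow_mul_pow_mul_pow_of_mem_closure (commute_Dz_Dx r s)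
    (commute_Dz_Dy r s) (Dy_mul_Dx r s)
    (isOfFinOrder_iff_pow_eq_one.2 ⟨_, by positivity, Dx_pow r s⟩)
    (isOfFinOrder_iff_pow_eq_one.2 ⟨_, by positivity, Dy_pow r s⟩)
    (closure_Dx_Dy r s ▸ Subgroup.mem_top g)
  refine ⟨(⟨i % 2 ^ r, Nat.mod_lt _ (by positivity)⟩, ⟨j % 2 ^ s, Nat.mod_lt _ (by positivity)⟩,
    ⟨k % 2, Nat.mod_lt _ two_pos⟩), ?_⟩
  simp only [← pow_eq_pow_mod _ (Dx_pow r s), ← pow_eq_pow_mod _ (Dy_pow r s),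
    ← pow_eq_pow_mod _ (Dz_sq r s)]

instance : Finite (RedeiGroup r s) := Finite.of_surjective _ (surjective_normalForm r s)

theorem card_le : Nat.card (RedeiGroup r s) ≤ 2 ^ r * 2 ^ s * 2 := by
  simpa [mul_assoc] using Nat.card_le_card_of_surjective _ (surjective_normalForm r s)

theorem nonempty_closure_mulEquiv {M : Type*} [Group M] {X Y : M} (hX : X ^ 2 ^ r = 1)
    (hY : Y ^ 2 ^ s = 1) (hZ : ⁅X, Y⁆ ^ 2 = 1) (hXZ : ⁅X, ⁅X, Y⁆⁆ = 1) (hYZ : ⁅Y, ⁅X, Y⁆⁆ = 1)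
    (hcard : 2 ^ r * 2 ^ s * 2 ≤ Nat.card (Subgroup.closure {X, Y})) :
    Nonempty (Subgroup.closure {X, Y} ≃* RedeiGroup r s) := by
  have hrels : ∀ w ∈ redeiRels r s, FreeGroup.lift ![X, Y] w = 1 := by
    rintro w (rfl | rfl | rfl | rfl | rfl) <;> simpa [gx, gy, map_commutatorElement]
  set π := PresentedGroup.toGroup hrels
  have hrange : π.range = Subgroup.closure {X, Y} := by
    rw [MonoidHom.range_eq_map, ← closure_Dx_Dy r s, MonoidHom.map_closure, Set.image_pair, Dx,
      Dy, PresentedGroup.toGroup.of, PresentedGroup.toGroup.of]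
    rfl
  have hbij : Function.Bijective π.rangeRestrict :=
    π.rangeRestrict_surjective.bijective_of_nat_card_le <|
      (card_le r s).trans (hcard.trans_eq (by rw [hrange]))
  exact ⟨(MulEquiv.subgroupCongr hrange.symm).trans (MulEquiv.ofBijective _ hbij).symm⟩

end RedeiGroup

theorem Subgroup.le_ker_of_coprime {G Q : Type*} [Group G] [Group Q] (f : G →* Q)
    {K : Subgroup G} (hK : (Nat.card K).Coprime (Nat.card Q)) : K ≤ f.ker := by
  rw [← Subgroup.map_eq_bot_iff, ← Subgroup.card_eq_one, ← Nat.dvd_one, ← hK.gcd_eq_one]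
  exact Nat.dvd_gcd (Subgroup.card_map_dvd K f) (Subgroup.card_subgroup_dvd_card _)

namespace SemidirectProduct

variable {N G : Type*} [Group N] [Group G] {φ : G →* MulAut N}

instance [Finite N] [Finite G] : Finite (N ⋊[φ] G) := Finite.of_equiv _ equivProd.symm

theorem commutatorElement_inr_inl (g : G) (n : N) :
    ⁅(inr g : N ⋊[φ] G), (inl n : N ⋊[φ] G)⁆ = inl (φ g n * n⁻¹) := by
  rw [commutatorElement_def, map_mul, inl_aut, map_inv, map_inv]

theorem le_range_inl_of_coprime {K : Subgroup (N ⋊[φ] G)}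
    (hK : (Nat.card K).Coprime (Nat.card G)) : K ≤ (inl : N →* N ⋊[φ] G).range :=
  range_inl_eq_ker_rightHom (φ := φ) ▸ Subgroup.le_ker_of_coprime rightHom hK

theorem card_mul_card_le_card {H : Subgroup (N ⋊[φ] G)} [Finite H] {S : Set N} {T : Set G}
    (hS : inl '' S ⊆ (H : Set (N ⋊[φ] G))) (hT : inr '' T ⊆ (H : Set (N ⋊[φ] G))) :
    Nat.card S * Nat.card T ≤ Nat.card H := by
  rw [← Nat.card_prod]
  refine Nat.card_le_card_of_injective
    (fun p => ⟨inl p.1.1 * inr p.2.1, H.mul_mem (hS ⟨_, p.1.2, rfl⟩) (hT ⟨_, p.2.2, rfl⟩)⟩) ?_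
  rintro ⟨⟨n, _⟩, ⟨g, _⟩⟩ ⟨⟨n', _⟩, ⟨g', _⟩⟩ h
  simp only [← mk_eq_inl_mul_inr, Subtype.mk.injEq, SemidirectProduct.ext_iff] at h
  obtain ⟨rfl, rfl⟩ := h
  rfl

end SemidirectProduct

theorem Nat.eq_of_odd_of_mul_two_pow_eq {a b m n : ℕ} (ha : Odd a) (hb : Odd b)
    (h : a * 2 ^ m = b * 2 ^ n) : a = b :=
  Nat.dvd_antisymm
    ((Nat.Coprime.pow_right n ha.coprime_two_right).dvd_of_dvd_mul_right ⟨2 ^ m, h.symm⟩)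
    ((Nat.Coprime.pow_right m hb.coprime_two_right).dvd_of_dvd_mul_right ⟨2 ^ n, h⟩)

namespace alternatingGroup

open Equiv SemidirectProduct Subgroup

theorem card_ne_three_of_normal {α : Type*} [Fintype α] [DecidableEq α] (hα : Nat.card α = 4)
    (M : Subgroup (alternatingGroup α)) [M.Normal] : Nat.card M ≠ 3 := by
  intro hM
  have hindex : Nat.card (alternatingGroup α ⧸ M) = 2 ^ 2 := by
    have := M.card_mul_index
    rw [hM, card_of_card_eq_four hα] at this
    rw [← Subgroup.index]; omega
  have : Fact (Nat.Prime 2) := ⟨Nat.prime_two⟩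
  have hcomm : commutator (alternatingGroup α) ≤ M :=
    Subgroup.Normal.quotient_commutative_iff_commutator_le.1
      (IsPGroup.isMulCommutative_of_card_eq_prime_sq hindex)
  have := Subgroup.card_dvd_of_le hcomm
  rw [← kleinFour_eq_commutator hα, kleinFour_card_of_card_eq_four hα, hM] at this
  omega

theorem not_exists_normal_two_complement {α C : Type*} [Fintype α] [DecidableEq α] [Group C]
    (hα : Nat.card α = 4) {k : ℕ} (hC : Nat.card C = 2 ^ k)
    (φ : C →* MulAut (alternatingGroup α)) :
    ¬ ∃ N : Subgroup (alternatingGroup α ⋊[φ] C),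
      N.Normal ∧ Odd (Nat.card N) ∧ ∃ m : ℕ, N.index = 2 ^ m := by
  rintro ⟨N, hN, hodd, m, hm⟩
  have hN3 : Nat.card N = 3 := by
    refine Nat.eq_of_odd_of_mul_two_pow_eq hodd (by decide) (m := m) (n := k + 2) ?_
    rw [← hm, N.card_mul_index, SemidirectProduct.card, card_of_card_eq_four hα, hC]
    ring
  have hNA : N ≤ (inl : alternatingGroup α →* _).range :=
    le_range_inl_of_coprime (hC ▸ Nat.Coprime.pow_right k hodd.coprime_two_right)
  have : (N.comap (inl : alternatingGroup α →* _)).Normal := hN.comap _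
  apply card_ne_three_of_normal hα (N.comap inl)
  rw [← card_map_of_injective (inl_injective (φ := φ)), map_comap_eq_self hNA, hN3]

def swap01_23 : alternatingGroup (Fin 4) :=
  ⟨swap 0 1 * swap 2 3, by rw [Perm.mem_alternatingGroup]; decide⟩

def swap02_13 : alternatingGroup (Fin 4) :=
  ⟨swap 0 2 * swap 1 3, by rw [Perm.mem_alternatingGroup]; decide⟩

def swap03_12 : alternatingGroup (Fin 4) :=
  ⟨swap 0 3 * swap 1 2, by rw [Perm.mem_alternatingGroup]; decide⟩

theorem eq_one_or_eq_swap_of_mul_self_eq_one :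
    ∀ a : alternatingGroup (Fin 4), a * a = 1 →
      a = 1 ∨ a = swap01_23 ∨ a = swap02_13 ∨ a = swap03_12 := by
  decide

theorem swap01_23_mul_swap02_13 : swap01_23 * swap02_13 = swap03_12 := by decide

theorem swap02_13_mul_swap03_12 : swap02_13 * swap03_12 = swap01_23 := by decide

theorem card_kleinFour_set :
    Nat.card ({1, swap01_23, swap02_13, swap03_12} : Set (alternatingGroup (Fin 4))) = 4 := by
  rw [Nat.card_coe_set_eq, Set.ncard_eq_toFinset_card']
  simp only [Set.toFinset_insert, Set.toFinset_singleton]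
  decide

theorem apply_swap02_13_of_pow_eq_one {σ : MulAut (alternatingGroup (Fin 4))} (hσ : σ ^ 4 = 1)
    (h : σ swap01_23 = swap02_13) : σ swap02_13 = swap01_23 := by
  have hsq : σ swap02_13 * σ swap02_13 = 1 := by
    rw [← map_mul, show swap02_13 * swap02_13 = 1 by decide, map_one]
  rcases eq_one_or_eq_swap_of_mul_self_eq_one _ hsq with h1 | h1 | h2 | h3
  · exact absurd (σ.injective (h1.trans (map_one σ).symm)) (by decide)
  · exact h1
  · exact absurd (σ.injective (h2.trans h.symm)) (by decide)
  · -- `σ` would permute the three involutions cyclically, an action of order 3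
    have hσ3 : (σ ^ 3) swap01_23 = swap01_23 := by
      rw [pow_succ, pow_succ, pow_one, MulAut.mul_apply, MulAut.mul_apply, h, h3,
        ← swap01_23_mul_swap02_13, map_mul, h, h3, swap02_13_mul_swap03_12]
    have : swap01_23 = swap02_13 :=
      calc swap01_23 = (σ ^ 4) swap01_23 := by rw [hσ, MulAut.one_apply]
        _ = σ ((σ ^ 3) swap01_23) := by rw [pow_succ', MulAut.mul_apply]
        _ = swap02_13 := by rw [hσ3, h]
    exact absurd this (by decide)

section Action

variable {C : Type*} [Group C] {φ : C →* MulAut (alternatingGroup (Fin 4))} {g : C}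

theorem commutatorElement_inr_inl_swap01_23 (h : φ g swap01_23 = swap02_13) :
    ⁅(inr g : alternatingGroup (Fin 4) ⋊[φ] C), inl swap01_23⁆ =
      (inl swap03_12 : alternatingGroup (Fin 4) ⋊[φ] C) := by
  rw [commutatorElement_inr_inl, h, show swap02_13 * swap01_23⁻¹ = swap03_12 by decide]

theorem card_mul_orderOf_le_card_closure [Finite C] (h : φ g swap01_23 = swap02_13) :
    4 * orderOf g ≤
      Nat.card (closure {inr g, inl swap01_23} : Subgroup (alternatingGroup (Fin 4) ⋊[φ] C)) := by
  set H : Subgroup (alternatingGroup (Fin 4) ⋊[φ] C) := closure {inr g, inl swap01_23}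
  have hgH : inr g ∈ H := subset_closure (by simp)
  have hyH : inl swap01_23 ∈ H := subset_closure (by simp)
  calc 4 * orderOf g
      = Nat.card ({1, swap01_23, swap02_13, swap03_12} : Set (alternatingGroup (Fin 4))) *
          Nat.card (zpowers g) := by rw [card_kleinFour_set, Nat.card_zpowers]
    _ ≤ Nat.card H := card_mul_card_le_card ?_ ?_
  · rintro _ ⟨v, hv, rfl⟩
    rcases hv with rfl | rfl | rfl | rfl
    · rw [map_one]; exact one_mem H
    · exact hyH
    · rw [← h, inl_aut, map_inv]
      exact mul_mem (mul_mem hgH hyH) (inv_mem hgH)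
    · rw [← commutatorElement_inr_inl_swap01_23 h, commutatorElement_def]
      exact mul_mem (mul_mem (mul_mem hgH hyH) (inv_mem hgH)) (inv_mem hyH)
  · rintro _ ⟨_, ⟨k, rfl⟩, rfl⟩
    rw [map_zpow]
    exact zpow_mem hgH k

end Action

theorem nonempty_closure_mulEquiv_redeiGroup {r : ℕ}
    {φ : Multiplicative (ZMod (2 ^ r)) →* MulAut (alternatingGroup (Fin 4))}
    (hφ : φ (.ofAdd 1) ^ 4 = 1) (hact : φ (.ofAdd 1) swap01_23 = swap02_13) :
    Nonempty (closure {(inr (.ofAdd 1) : alternatingGroup (Fin 4) ⋊[φ] _), inl swap01_23} ≃*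
      RedeiGroup r 1) := by
  have : NeZero (2 ^ r) := ⟨by positivity⟩
  set x : Multiplicative (ZMod (2 ^ r)) := .ofAdd 1
  have hx : orderOf x = 2 ^ r := by rw [orderOf_ofAdd_eq_addOrderOf, ZMod.addOrderOf_one]
  have hz := commutatorElement_inr_inl_swap01_23 hact
  have hfix : φ x swap03_12 = swap03_12 := by
    rw [← swap01_23_mul_swap02_13, map_mul, hact, apply_swap02_13_of_pow_eq_one hφ hact]
    decide
  refine RedeiGroup.nonempty_closure_mulEquiv r 1 ?_ ?_ ?_ ?_ ?_ ?_
  · rw [← map_pow, orderOf_dvd_iff_pow_eq_one.1 hx.dvd, map_one]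
  · rw [← map_pow, show swap01_23 ^ 2 ^ 1 = 1 by decide, map_one]
  · rw [hz, ← map_pow, show swap03_12 ^ 2 = 1 by decide, map_one]
  · rw [hz, commutatorElement_inr_inl, hfix, mul_inv_cancel, map_one]
  · rw [hz, ← map_commutatorElement, show ⁅swap01_23, swap03_12⁆ = 1 by decide, map_one]
  · calc 2 ^ r * 2 ^ 1 * 2 = 4 * orderOf x := by rw [hx]; ring
      _ ≤ _ := card_mul_orderOf_le_card_closure hact

end alternatingGroup

theorem stmt12 (r : ℕ)
    (φ : Multiplicative (ZMod (2 ^ r)) →* MulAut (alternatingGroup (Fin 4)))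
    (hord : orderOf (φ (Multiplicative.ofAdd (1 : ZMod (2 ^ r)))) = 4)
    (hact : φ (Multiplicative.ofAdd (1 : ZMod (2 ^ r)))
        (⟨Equiv.swap 0 1 * Equiv.swap 2 3, by rw [Equiv.Perm.mem_alternatingGroup]; decide⟩ : alternatingGroup (Fin 4)) =
      (⟨Equiv.swap 0 2 * Equiv.swap 1 3, by rw [Equiv.Perm.mem_alternatingGroup]; decide⟩ : alternatingGroup (Fin 4))) :
    Nonempty
      ((Subgroup.closure
        {SemidirectProduct.inr (Multiplicative.ofAdd (1 : ZMod (2 ^ r))),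
         SemidirectProduct.inl
           (⟨Equiv.swap 0 1 * Equiv.swap 2 3, by rw [Equiv.Perm.mem_alternatingGroup]; decide⟩ : alternatingGroup (Fin 4))} :
        Subgroup (alternatingGroup (Fin 4) ⋊[φ] Multiplicative (ZMod (2 ^ r)))) ≃*
        RedeiGroup r 1) ∧
    ¬ ∃ N : Subgroup (alternatingGroup (Fin 4) ⋊[φ] Multiplicative (ZMod (2 ^ r))),
        N.Normal ∧ Odd (Nat.card N) ∧ ∃ m : ℕ, N.index = 2 ^ m := by
  refine ⟨alternatingGroup.nonempty_closure_mulEquiv_redeiGroup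
    (orderOf_dvd_iff_pow_eq_one.1 hord.dvd) hact, ?_⟩
  refine alternatingGroup.not_exists_normal_two_complement (by simp) (k := r) ?_ φ
  rw [Nat.card_congr Multiplicative.toAdd, Nat.card_zmod]
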